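/- arXiv:2104.06586 — 2 statements merged into one kernel-verified Lean document; each statement's English description precedes it below -/
import Mathlib

section
/- Let $A$ be a $\mathbb{Z}$-graded commutative ring. Then the following are equivalent: (1) $A$ is a Noetherian ring; (2) every homogeneous (graded) ideal of $A$ is finitely generated; (3) $A_0$ is Noetherian and both $A_{\geq 0}$ and $A_{\leq 0}$ are finitely generated $A_0$-algebras; (4) $A_0$ is Noetherian and $A$ is a finitely generated $A_0$-algebra. -/
/-!
(4) ⇒ (1) is Hilbert's basis theorem, and (3) ⇒ (4) holds because every homogeneous element
lies in `A_{≥0}` or in `A_{≤0}`. For (2) ⇒ (3), the degree-`0` projection is an `A₀`-linear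
retraction `A → A₀`, so an ideal `I` of `A₀` is generated by finitely many generators of the
homogeneous ideal `IA`, and in the same way every `Aₙ` is a finitely generated `A₀`-module.
The homogeneous ideal generated by `A_{>0}` has finitely many homogeneous generators `xⱼ` of
degrees `0 < dⱼ ≤ D`. An element of degree `n > D` is a sum `∑ rⱼ xⱼ` with `rⱼ` of degree
`n - dⱼ ∈ [0, n)`, so by induction on `n` the `xⱼ` together with generators of `A₀, …, A_D`
generate `A_{≥0}` over `A₀`. The same argument applies to `A_{≤0}`.
-/

open DirectSum

namespace Ideal

theorem fg_of_fg_map_of_retraction {R S : Type*} [CommRing R] [CommRing S] [Algebra R S]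
    (ρ : S →ₗ[R] R) (hρ : ∀ r, ρ (algebraMap R S r) = r) {I : Ideal R}
    (hI : (I.map (algebraMap R S)).FG) : I.FG := by
  classical
  obtain ⟨T, hTI, hspan⟩ := (Submodule.fg_span_iff_fg_span_finset_subset _).mp hI
  obtain ⟨T', hT'I, rfl⟩ := Finset.subset_set_image_iff.mp hTI
  refine ⟨T', le_antisymm (Ideal.span_le.mpr hT'I) fun x hx => ?_⟩
  have hx' : algebraMap R S x ∈ Ideal.span (T'.image (algebraMap R S) : Set S) := by
    rw [Ideal.span, ← hspan]; exact Submodule.subset_span ⟨x, hx, rfl⟩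
  obtain ⟨c, -, hc⟩ := Submodule.mem_span_finset.mp hx'
  rw [← hρ x, ← hc, map_sum]
  refine Ideal.sum_mem _ fun t ht => ?_
  obtain ⟨t', ht', rfl⟩ := Finset.mem_image.mp ht
  rw [smul_eq_mul, mul_comm, ← Algebra.smul_def, map_smul, smul_eq_mul]
  exact Ideal.mul_mem_right _ _ (Ideal.subset_span ht')

end Ideal

theorem isNoetherianRing_of_retraction {R S : Type*} [CommRing R] [CommRing S] [Algebra R S]
    (ρ : S →ₗ[R] R) (hρ : ∀ r, ρ (algebraMap R S r) = r)
    (h : ∀ I : Ideal R, (I.map (algebraMap R S)).FG) : IsNoetherianRing R :=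
  (isNoetherianRing_iff_ideal_fg R).mpr fun I => Ideal.fg_of_fg_map_of_retraction ρ hρ (h I)

theorem Set.iUnion_int_nonneg {α : Type*} (f : ℤ → Set α) :
    ⋃ (i : ℤ) (_ : 0 ≤ i), f i = ⋃ n : ℕ, f n := by
  ext x
  simp only [Set.mem_iUnion, exists_prop]
  exact ⟨fun ⟨i, hi, hx⟩ => ⟨i.toNat, by rwa [Int.toNat_of_nonneg hi]⟩,
    fun ⟨n, hx⟩ => ⟨n, n.cast_nonneg, hx⟩⟩

theorem Set.iUnion_int_nonpos {α : Type*} (f : ℤ → Set α) :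
    ⋃ (i : ℤ) (_ : i ≤ 0), f i = ⋃ n : ℕ, f (-n) := by
  ext x
  simp only [Set.mem_iUnion, exists_prop]
  exact ⟨fun ⟨i, hi, hx⟩ => ⟨(-i).toNat, by rwa [Int.toNat_of_nonneg (by omega), neg_neg]⟩,
    fun ⟨n, hx⟩ => ⟨-n, by omega, hx⟩⟩

namespace GradedRing

section

variable {ι A : Type*} [DecidableEq ι] [AddCommGroup ι] [CommRing A] (𝒜 : ι → AddSubgroup A)
  [GradedRing 𝒜]

def projZeroLinearMap : A →ₗ[𝒜 0] 𝒜 0 where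
  toFun a := decompose 𝒜 a 0
  map_add' a b := by simp
  map_smul' r a := Subtype.ext (coe_decompose_mul_of_left_mem_zero 𝒜 r.2)

theorem isNoetherianRing_gradeZero (h : ∀ I : Ideal A, I.IsHomogeneous 𝒜 → I.FG) :
    IsNoetherianRing (𝒜 0) := by
  refine isNoetherianRing_of_retraction (projZeroLinearMap 𝒜) (fun r => ?_) fun I => h _ ?_
  · exact Subtype.ext (decompose_of_mem_same 𝒜 r.2)
  · exact Ideal.homogeneous_span 𝒜 _ fun _ ⟨r, _, hr⟩ => ⟨0, hr ▸ r.2⟩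

theorem closure_gradeZero_eq : Subring.closure (𝒜 0 : Set A) = SetLike.GradeZero.subring 𝒜 :=
  Subring.closure_eq (SetLike.GradeZero.subring 𝒜)

theorem closure_gradeZero_union_eq_adjoin (s : Set A) :
    Subring.closure ((𝒜 0 : Set A) ∪ s) = (Algebra.adjoin (𝒜 0) s).toSubring := by
  rw [Algebra.adjoin_eq_ring_closure]
  congr 2
  ext x
  simp

theorem subring_eq_top_of_forall_grade_subset {B : Subring A}
    (h : ∀ i, (𝒜 i : Set A) ⊆ B) : B = ⊤ :=
  eq_top_iff.mpr fun a _ =>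
    Decomposition.inductionOn 𝒜 B.zero_mem (fun m => h _ m.2) (fun _ _ => B.add_mem) a

theorem mem_addSubgroupClosure_of_mem_span {T : Set A} {d : A → ι}
    (hT : ∀ t ∈ T, t ∈ 𝒜 (d t)) {n : ι} {a : A} (ha : a ∈ 𝒜 n) (hs : a ∈ Ideal.span T) :
    a ∈ AddSubgroup.closure {x | ∃ t ∈ T, ∃ r ∈ 𝒜 (n - d t), r * t = x} := by
  obtain ⟨c, hc, hsum⟩ := Submodule.mem_span_set.mp hs
  rw [← decompose_of_mem_same 𝒜 ha, ← hsum, ← proj_apply, map_finsuppSum]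
  refine sum_mem fun t ht => AddSubgroup.subset_closure
    ⟨t, hc ht, _, SetLike.coe_mem (decompose 𝒜 (c t) (n - d t)), ?_⟩
  simp only [proj_apply, smul_eq_mul]
  rw [← coe_decompose_mul_add_of_right_mem 𝒜 (hT t (hc ht)), sub_add_cancel]

theorem exists_finset_grade_subset_span_gradeZero {n : ι} (h : (Ideal.span (𝒜 n : Set A)).FG) :
    ∃ F : Finset A, (F : Set A) ⊆ 𝒜 n ∧ (𝒜 n : Set A) ⊆ Submodule.span (𝒜 0) (F : Set A) := by
  obtain ⟨F, hFn, hspan⟩ := (Submodule.fg_span_iff_fg_span_finset_subset _).mp h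
  refine ⟨F, hFn, fun a ha => ?_⟩
  have hmem : a ∈ Ideal.span (F : Set A) := by
    rw [Ideal.span, ← hspan]; exact Submodule.subset_span ha
  refine (AddSubgroup.closure_le (K := (Submodule.span (𝒜 0) (F : Set A)).toAddSubgroup)).mpr ?_
    (mem_addSubgroupClosure_of_mem_span 𝒜 (d := fun _ => n) (fun _ ht => hFn ht) ha hmem)
  rintro _ ⟨t, ht, r, hr, rfl⟩
  exact Submodule.smul_mem _ (⟨r, by simpa using hr⟩ : 𝒜 0) (Submodule.subset_span ht)

end

section

variable {A : Type*} [CommRing A] (𝒜 : ℤ → AddSubgroup A) [GradedRing 𝒜]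

theorem grade_mul_natCast_subset {B : Subring A} {σ : ℤ} {T : Set A} {d : A → ℕ} {D : ℕ}
    (hT : ∀ t ∈ T, 0 < d t ∧ d t ≤ D ∧ t ∈ 𝒜 (σ * d t))
    (hspan : ∀ n : ℕ, 0 < n → (𝒜 (σ * n) : Set A) ⊆ Ideal.span T)
    (hTB : T ⊆ B) (hsmall : ∀ k ≤ D, (𝒜 (σ * k) : Set A) ⊆ B) (n : ℕ) :
    (𝒜 (σ * n) : Set A) ⊆ B := by
  induction n using Nat.strong_induction_on with
  | _ n IH =>
  rcases le_or_gt n D with hn | hn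
  · exact hsmall n hn
  intro a ha
  refine (AddSubgroup.closure_le (K := B.toAddSubgroup)).mpr ?_ <|
    mem_addSubgroupClosure_of_mem_span 𝒜 (d := fun t => σ * d t) (fun t ht => (hT t ht).2.2) ha
      (hspan n (by omega) ha)
  rintro _ ⟨t, ht, r, hr, rfl⟩
  obtain ⟨hd0, hdD, -⟩ := hT t ht
  have hr' : r ∈ 𝒜 (σ * (n - d t : ℕ)) := by rwa [Nat.cast_sub (by omega), mul_sub]
  exact B.mul_mem (IH _ (by omega) hr') (hTB ht)

theorem exists_adjoin_eq_closure_grade_mul_natCast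
    (h : ∀ I : Ideal A, I.IsHomogeneous 𝒜 → I.FG) (σ : ℤ) :
    ∃ s : Finset A, (Algebra.adjoin (𝒜 0) (s : Set A)).toSubring =
      Subring.closure (⋃ n : ℕ, (𝒜 (σ * n) : Set A)) := by
  classical
  set U := ⋃ n : ℕ, ⋃ _ : 0 < n, (𝒜 (σ * n) : Set A) with hU
  have hUhom : (Ideal.span U).IsHomogeneous 𝒜 :=
    Ideal.homogeneous_span 𝒜 U fun x hx => by
      obtain ⟨n, -, hx⟩ := by simpa only [hU, Set.mem_iUnion] using hx
      exact ⟨_, hx⟩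
  obtain ⟨T, hTU, hTspan⟩ := (Submodule.fg_span_iff_fg_span_finset_subset U).mp (h _ hUhom)
  have hTdeg : ∀ t ∈ T, ∃ n : ℕ, 0 < n ∧ t ∈ 𝒜 (σ * n) := fun t ht => by
    simpa only [hU, Set.mem_iUnion, exists_prop, SetLike.mem_coe] using hTU ht
  choose! d hd0 hd using hTdeg
  choose F hFk hF using fun k : ℕ => exists_finset_grade_subset_span_gradeZero 𝒜
    (h _ (Ideal.homogeneous_span 𝒜 _ fun x hx => ⟨σ * k, hx⟩))
  set D := T.sup d
  set s := T ∪ (Finset.range (D + 1)).biUnion F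
  refine ⟨s, le_antisymm ?_ ?_⟩
  · rw [← closure_gradeZero_union_eq_adjoin, Subring.closure_le]
    refine Set.union_subset (fun x hx => Subring.subset_closure
      (Set.mem_iUnion.mpr ⟨0, by simpa using hx⟩)) fun x hx => ?_
    obtain ⟨n, hn⟩ : ∃ n : ℕ, x ∈ 𝒜 (σ * n) := by
      rcases Finset.mem_union.mp hx with hx | hx
      · exact ⟨d x, hd x hx⟩
      · obtain ⟨k, -, hxk⟩ := Finset.mem_biUnion.mp hx
        exact ⟨k, hFk k hxk⟩
    exact Subring.subset_closure (Set.mem_iUnion.mpr ⟨n, hn⟩)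
  · rw [Subring.closure_le, Set.iUnion_subset_iff]
    refine grade_mul_natCast_subset 𝒜 (T := T) (D := D)
      (fun t ht => ⟨hd0 t ht, Finset.le_sup ht, hd t ht⟩) ?_ ?_ ?_
    · intro n hn x hx
      rw [Ideal.span, ← hTspan]
      exact Submodule.subset_span (Set.mem_iUnion₂.mpr ⟨n, hn, hx⟩)
    · exact fun t ht => Algebra.subset_adjoin (Finset.mem_union_left _ ht)
    · intro k hk x hx
      refine Algebra.span_le_adjoin _ _ (Submodule.span_mono ?_ (hF k hx))
      exact fun y hy => Finset.mem_union_right _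
        (Finset.mem_biUnion.mpr ⟨k, Finset.mem_range.mpr (Nat.lt_succ_of_le hk), hy⟩)

end

end GradedRing

theorem noetherian_Z_graded_ring_tfae
    {A : Type*} [CommRing A] (𝒜 : ℤ → AddSubgroup A) [GradedRing 𝒜] :
    List.TFAE
      [ IsNoetherianRing A,
        ∀ I : Ideal A, I.IsHomogeneous 𝒜 → I.FG,
        IsNoetherianRing (Subring.closure (𝒜 0 : Set A)) ∧
          (∃ s : Finset A,
            Subring.closure ((𝒜 0 : Set A) ∪ s) =
              Subring.closure (⋃ (i : ℤ) (_ : 0 ≤ i), (𝒜 i : Set A))) ∧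
          (∃ s : Finset A,
            Subring.closure ((𝒜 0 : Set A) ∪ s) =
              Subring.closure (⋃ (i : ℤ) (_ : i ≤ 0), (𝒜 i : Set A))),
        IsNoetherianRing (Subring.closure (𝒜 0 : Set A)) ∧
          ∃ s : Finset A, Subring.closure ((𝒜 0 : Set A) ∪ s) = ⊤ ] := by
  simp_rw [GradedRing.closure_gradeZero_union_eq_adjoin]
  rw [GradedRing.closure_gradeZero_eq]
  tfae_have 1 → 2 := fun h I _ => (isNoetherianRing_iff_ideal_fg A).mp h I
  tfae_have 2 → 3 := fun h => by
    refine ⟨GradedRing.isNoetherianRing_gradeZero 𝒜 h, ?_, ?_⟩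
    · obtain ⟨s, hs⟩ := GradedRing.exists_adjoin_eq_closure_grade_mul_natCast 𝒜 h 1
      exact ⟨s, by simpa [Set.iUnion_int_nonneg] using hs⟩
    · obtain ⟨s, hs⟩ := GradedRing.exists_adjoin_eq_closure_grade_mul_natCast 𝒜 h (-1)
      exact ⟨s, by simpa [Set.iUnion_int_nonpos] using hs⟩
  tfae_have 3 → 4 := by
    rintro ⟨hN, ⟨s, hs⟩, ⟨t, ht⟩⟩
    classical
    refine ⟨hN, s ∪ t, GradedRing.subring_eq_top_of_forall_grade_subset 𝒜 fun i x hx => ?_⟩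
    rw [Finset.coe_union]
    rcases le_total 0 i with hi | hi
    · exact Algebra.adjoin_mono Set.subset_union_left
        (hs.ge (Subring.subset_closure (Set.mem_iUnion₂_of_mem hi hx)))
    · exact Algebra.adjoin_mono Set.subset_union_right
        (ht.ge (Subring.subset_closure (Set.mem_iUnion₂_of_mem hi hx)))
  tfae_have 4 → 1 := fun ⟨hN, s, hs⟩ =>
    have : IsNoetherianRing (𝒜 0) := hN
    have : Algebra.FiniteType (𝒜 0) A := ⟨⟨s, Subalgebra.toSubring_injective hs⟩⟩
    Algebra.FiniteType.isNoetherianRing (𝒜 0) A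
  tfae_finish
end

section
/- Let $A$ be a $\mathbb{Z}$-graded commutative ring and let $f \in A_d$ be a homogeneous element of degree $d > 0$. Then the natural map of localizations $(A_{\geq 0})_f \to A_f$ is an isomorphism, where $A_{\geq 0} = \bigoplus_{i \geq 0} A_i$ is viewed as a subring of $A$. -/
/-! Every `a ∈ A` becomes non-negatively graded after multiplication by a power of `f`: the
homogeneous component of degree `i` times `f ^ m` has degree `i + m d ≥ i + m`. So the inclusion
`A_{≥0} ⊆ A` is injective and surjective "up to powers of `f`", which is exactly bijectivity
after inverting `f`. -/

theorem Localization.awayMap_bijective_of_injective {R A : Type*} [CommRing R] [CommRing A]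
    (g : R →+* A) (hg : Function.Injective g) (r : R)
    (h : ∀ a : A, ∃ (b : R) (m : ℕ), g b = g r ^ m * a) :
    Function.Bijective (awayMap g r) :=
  ⟨awayMap_injective_iff.mpr fun a ha ↦ ⟨0, by simpa using hg (ha.trans g.map_zero.symm)⟩,
    awayMap_surjective_iff.mpr h⟩

section NonnegPart

variable {A σ : Type*} [Ring A] [SetLike σ A] [AddSubmonoidClass σ A] (𝒜 : ℤ → σ)
  [GradedRing 𝒜]

theorem pow_mul_mem_closure_nonneg_of_mem {d : ℤ} (hd : 0 < d) {f : A} (hf : f ∈ 𝒜 d)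
    {i : ℤ} {a : A} (ha : a ∈ 𝒜 i) {m : ℕ} (hm : -i ≤ m) :
    f ^ m * a ∈ Subring.closure (⋃ (i : ℤ) (_ : 0 ≤ i), (𝒜 i : Set A)) := by
  refine Subring.subset_closure <| Set.mem_iUnion₂.2
    ⟨m • d + i, ?_, SetLike.mul_mem_graded (SetLike.pow_mem_graded m hf) ha⟩
  rw [nsmul_eq_mul]
  nlinarith

theorem exists_pow_mul_mem_closure_nonneg {d : ℤ} (hd : 0 < d) {f : A} (hf : f ∈ 𝒜 d)
    (a : A) :
    ∃ m : ℕ, f ^ m * a ∈ Subring.closure (⋃ (i : ℤ) (_ : 0 ≤ i), (𝒜 i : Set A)) := by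
  classical
  set s := (DirectSum.decompose 𝒜 a).support
  refine ⟨s.sup fun i ↦ (-i).toNat, ?_⟩
  rw [← DirectSum.sum_support_decompose 𝒜 a, Finset.mul_sum]
  refine Subring.sum_mem _ fun i hi ↦
    pow_mul_mem_closure_nonneg_of_mem 𝒜 hd hf (SetLike.coe_mem _) ?_
  calc -i ≤ (-i).toNat := Int.self_le_toNat _
    _ ≤ _ := by exact_mod_cast Finset.le_sup (f := fun i ↦ (-i).toNat) hi

end NonnegPart

theorem localization_nonneg_part_at_positive_degree_element_bijective
    {A : Type*} [CommRing A] (𝒜 : ℤ → AddSubgroup A) [GradedRing 𝒜]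
    (d : ℤ) (hd : 0 < d) (f : A) (hf : f ∈ 𝒜 d)
    (hf' : f ∈ Subring.closure (⋃ (i : ℤ) (_ : 0 ≤ i), (𝒜 i : Set A))) :
    Function.Bijective
      (Localization.awayLift
        ((algebraMap A (Localization.Away f)).comp
          (Subring.closure (⋃ (i : ℤ) (_ : 0 ≤ i), (𝒜 i : Set A))).subtype)
        (⟨f, hf'⟩ : Subring.closure (⋃ (i : ℤ) (_ : 0 ≤ i), (𝒜 i : Set A)))
        (IsLocalization.map_units (M := Submonoid.powers f) (Localization.Away f)
          ⟨f, Submonoid.mem_powers f⟩)) := by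
  set S := Subring.closure (⋃ (i : ℤ) (_ : 0 ≤ i), (𝒜 i : Set A))
  -- Both `awayLift (algebraMap ∘ subtype)` and `awayMap subtype` unfold to the same
  -- `IsLocalization.lift`.
  exact Localization.awayMap_bijective_of_injective S.subtype Subtype.val_injective ⟨f, hf'⟩
    fun a ↦
      have ⟨m, hm⟩ := exists_pow_mul_mem_closure_nonneg 𝒜 hd hf a
      ⟨⟨_, hm⟩, m, rfl⟩
end
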